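/- Let ϑ : a ↦ {ab, ba}, b ↦ {a} be the random Fibonacci substitution. Then the word aaaaa (five consecutive a's) is not ϑ-legal. -/
import Mathlib


/-- Extension of a random substitution to words. -/
def substWord {A : Type} (ϑ : A → Set (List A)) : List A → Set (List A)
  | [] => {[]}
  | a :: v => {w | ∃ x ∈ ϑ a, ∃ y ∈ substWord ϑ v, w = x ++ y}

/-- The `n`-th power of a random substitution applied to a letter. -/
def substPow {A : Type} (ϑ : A → Set (List A)) : ℕ → A → Set (List A)
  | 0, a => {[a]}
  | n + 1, a => {w | ∃ v ∈ substPow ϑ n a, w ∈ substWord ϑ v}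

/-- A word is `ϑ`-legal if it is a subword of a super-word of some degree `k ≥ 1`. -/
def RSLegal {A : Type} (ϑ : A → Set (List A)) (w : List A) : Prop :=
  ∃ k : ℕ, 1 ≤ k ∧ ∃ a : A, ∃ v ∈ substPow ϑ k a, w <:+: v

/-- Key run-length lemma: the image of a `bbb`-free word is `aaaaa`-free,
with auxiliary prefix bookkeeping. -/
lemma randFib_mega (ϑ : Fin 2 → Set (List (Fin 2)))
    (h0 : ϑ 0 = {[0, 1], [1, 0]}) (h1 : ϑ 1 = {[0]}) :
    ∀ w u, u ∈ substWord ϑ w →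
      (¬ [1] <+: w → ¬ [0, 0] <+: u) ∧
      (¬ [1, 1] <+: w → ¬ [0, 0, 0] <+: u) ∧
      (¬ [1, 1, 1] <+: w → ¬ [0, 0, 0, 0] <+: u) ∧
      (¬ [1, 1, 1] <:+: w → ¬ [0, 0, 0, 0, 0] <:+: u) := by
  intro w
  induction w with
  | nil =>
      intro u hu
      simp only [substWord, Set.mem_singleton_iff] at hu
      subst hu
      refine ⟨?_, ?_, ?_, ?_⟩ <;> intro _ h <;>
        exact absurd h.length_le (by simp)
  | cons c v ih =>
      intro u hu
      obtain ⟨x, hx, y, hy, rfl⟩ := hu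
      obtain ⟨IH1, IH2, IH3, IH4⟩ := ih y hy
      obtain rfl | rfl : c = 0 ∨ c = 1 := by omega
      · rw [h0] at hx
        simp only [Set.mem_insert_iff, Set.mem_singleton_iff] at hx
        rcases hx with rfl | rfl
        · -- x = [0,1], u = 0 :: 1 :: y
          refine ⟨?_, ?_, ?_, ?_⟩
          · intro _ h; simp [List.cons_prefix_cons] at h
          · intro _ h; simp [List.cons_prefix_cons] at h
          · intro _ h; simp [List.cons_prefix_cons] at h
          · intro hw h
            rw [show ([0,1] : List (Fin 2)) ++ y = 0 :: 1 :: y from rfl,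
              List.infix_cons_iff] at h
            rcases h with h | h
            · simp [List.cons_prefix_cons] at h
            · rw [List.infix_cons_iff] at h
              rcases h with h | h
              · simp [List.cons_prefix_cons] at h
              · exact IH4 (fun hv => hw (List.infix_cons hv)) h
        · -- x = [1,0], u = 1 :: 0 :: y
          refine ⟨?_, ?_, ?_, ?_⟩
          · intro _ h; simp [List.cons_prefix_cons] at h
          · intro _ h; simp [List.cons_prefix_cons] at h
          · intro _ h; simp [List.cons_prefix_cons] at h
          · intro hw h
            rw [show ([1,0] : List (Fin 2)) ++ y = 1 :: 0 :: y from rfl,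
              List.infix_cons_iff] at h
            rcases h with h | h
            · simp [List.cons_prefix_cons] at h
            · rw [List.infix_cons_iff] at h
              rcases h with h | h
              · rw [List.cons_prefix_cons] at h
                exact IH3 (fun hv => hw (List.infix_cons hv.isInfix)) h.2
              · exact IH4 (fun hv => hw (List.infix_cons hv)) h
      · rw [h1] at hx
        simp only [Set.mem_singleton_iff] at hx
        subst hx
        -- x = [0], u = 0 :: y, w = 1 :: v
        refine ⟨?_, ?_, ?_, ?_⟩
        · intro hw _; exact hw (by simp [List.cons_prefix_cons])
        · intro hw h
          rw [show ([0] : List (Fin 2)) ++ y = 0 :: y from rfl,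
            List.cons_prefix_cons] at h
          exact IH1 (fun hv => hw (List.cons_prefix_cons.mpr ⟨rfl, hv⟩)) h.2
        · intro hw h
          rw [show ([0] : List (Fin 2)) ++ y = 0 :: y from rfl,
            List.cons_prefix_cons] at h
          exact IH2 (fun hv => hw (List.cons_prefix_cons.mpr ⟨rfl, hv⟩)) h.2
        · intro hw h
          rw [show ([0] : List (Fin 2)) ++ y = 0 :: y from rfl,
            List.infix_cons_iff] at h
          rcases h with h | h
          · rw [List.cons_prefix_cons] at h
            exact IH3 (fun hv => hw (List.infix_cons hv.isInfix)) h.2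
          · exact IH4 (fun hv => hw (List.infix_cons hv)) h
  
/-- No image under the substitution contains `bbb`; moreover no image starts with `bb`. -/
lemma randFib_noBBB (ϑ : Fin 2 → Set (List (Fin 2)))
    (h0 : ϑ 0 = {[0, 1], [1, 0]}) (h1 : ϑ 1 = {[0]}) :
    ∀ w u, u ∈ substWord ϑ w → ¬ [1, 1] <+: u ∧ ¬ [1, 1, 1] <:+: u := by
  intro w
  induction w with
  | nil =>
      intro u hu
      simp only [substWord, Set.mem_singleton_iff] at hu
      subst hu
      constructor <;> intro h <;> exact absurd h.length_le (by simp)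
  | cons c v ih =>
      intro u hu
      obtain ⟨x, hx, y, hy, rfl⟩ := hu
      obtain ⟨IH1, IH2⟩ := ih y hy
      obtain rfl | rfl : c = 0 ∨ c = 1 := by omega
      · rw [h0] at hx
        simp only [Set.mem_insert_iff, Set.mem_singleton_iff] at hx
        rcases hx with rfl | rfl
        · refine ⟨?_, ?_⟩
          · intro h; simp [List.cons_prefix_cons] at h
          · intro h
            rw [show ([0,1] : List (Fin 2)) ++ y = 0 :: 1 :: y from rfl,
              List.infix_cons_iff] at h
            rcases h with h | h
            · simp [List.cons_prefix_cons] at h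
            · rw [List.infix_cons_iff] at h
              rcases h with h | h
              · rw [List.cons_prefix_cons] at h
                exact IH1 h.2
              · exact IH2 h
        · refine ⟨?_, ?_⟩
          · intro h; simp [List.cons_prefix_cons] at h
          · intro h
            rw [show ([1,0] : List (Fin 2)) ++ y = 1 :: 0 :: y from rfl,
              List.infix_cons_iff] at h
            rcases h with h | h
            · simp [List.cons_prefix_cons] at h
            · rw [List.infix_cons_iff] at h
              rcases h with h | h
              · simp [List.cons_prefix_cons] at h
              · exact IH2 h
      · rw [h1] at hx
        simp only [Set.mem_singleton_iff] at hx
        subst hx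
        refine ⟨?_, ?_⟩
        · intro h; simp [List.cons_prefix_cons] at h
        · intro h
          rw [show ([0] : List (Fin 2)) ++ y = 0 :: y from rfl,
            List.infix_cons_iff] at h
          rcases h with h | h
          · simp [List.cons_prefix_cons] at h
          · exact IH2 h

/-- No super-word of any degree contains `bbb`. -/
lemma randFib_pow_noBBB (ϑ : Fin 2 → Set (List (Fin 2)))
    (h0 : ϑ 0 = {[0, 1], [1, 0]}) (h1 : ϑ 1 = {[0]}) :
    ∀ n a w, w ∈ substPow ϑ n a → ¬ [1, 1, 1] <:+: w := by
  intro n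
  induction n with
  | zero =>
      intro a w hw
      simp only [substPow, Set.mem_singleton_iff] at hw
      subst hw
      intro h; exact absurd h.length_le (by simp)
  | succ n ih =>
      intro a w hw
      obtain ⟨v, _, hv⟩ := hw
      exact (randFib_noBBB ϑ h0 h1 v w hv).2

/-- for the random Fibonacci substitution
`ϑ : a ↦ {ab, ba}, b ↦ {a}` (with `a = 0`, `b = 1`), the word `aaaaa` is not
`ϑ`-legal. -/
theorem randFib_aaaaa_not_legal (ϑ : Fin 2 → Set (List (Fin 2)))
    (h0 : ϑ 0 = {[0, 1], [1, 0]}) (h1 : ϑ 1 = {[0]}) :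
    ¬ RSLegal ϑ [0, 0, 0, 0, 0] := by
  rintro ⟨k, hk, a, v, hv, hinf⟩
  obtain ⟨n, rfl⟩ : ∃ n, k = n + 1 := ⟨k - 1, (Nat.succ_pred_eq_of_pos hk).symm⟩
  obtain ⟨w, hw, hvw⟩ := hv
  have hbbb : ¬ [1, 1, 1] <:+: w := randFib_pow_noBBB ϑ h0 h1 n a w hw
  exact (randFib_mega ϑ h0 h1 w v hvw).2.2.2 hbbb hinf
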